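/- Let q = 3^d with d even, and let b, b' ∈ F_q. The curves E_b: y^2 = x^3 - x + b and E_{b'}: y^2 = x^3 - x + b' are isomorphic over F_q if and only if Tr(b) = ±Tr(b'), where Tr is the trace to F_3; equivalently, iff Tr(b) = 0 ⟺ Tr(b') = 0. -/

import Mathlib

/-!
In characteristic 3 a change of variables taking `E_b` to `E_{b'}` must have `s = t = 0` and
`u⁴ = 1`, and then `b' = u⁻⁶ (b + r³ - r) = ±(b + r³ - r)`. By the additive Hilbert 90 for the
Frobenius, the elements `r³ - r` are exactly those of trace zero, so the curves are isomorphic iff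
`b' = ±b` modulo trace-zero elements; the sign `-1` is realised by `u = √-1`, which exists because
`q = 3^d` is a square. In `𝔽₃`, `x = ±y` is the same as `x = 0 ↔ y = 0`.
-/

/-- The Weierstrass curve `y² = x³ - x + b`. -/
def Eb (F : Type) [Field F] (b : F) : WeierstrassCurve F :=
  { a₁ := 0, a₂ := 0, a₃ := 0, a₄ := -1, a₆ := b }

section ArtinSchreier

variable {K L : Type*} [Field K] [Fintype K] [Field L] [Algebra K L]

open Polynomial in
theorem FiniteField.mem_range_algebraMap_of_pow_card_eq_self {x : L}
    (hx : x ^ Fintype.card K = x) : x ∈ (algebraMap K L).range := by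
  have hne := FiniteField.X_pow_card_sub_X_ne_zero K (Fintype.one_lt_card (α := K))
  have hs : Splits (X ^ Fintype.card K - X : K[X]) := by
    rw [splits_iff_card_roots, FiniteField.roots_X_pow_card_sub_X, ← Finset.card_def,
      Finset.card_univ, FiniteField.X_pow_card_sub_X_natDegree_eq K (Fintype.one_lt_card (α := K))]
  exact hs.mem_range_of_isRoot hne (by simp [hx])

variable [Finite L]

theorem Algebra.trace_pow_card (x : L) :
    Algebra.trace K L (x ^ Fintype.card K) = Algebra.trace K L x :=
  Algebra.trace_eq_of_algEquiv (FiniteField.frobeniusAlgEquivOfAlgebraic K L) x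

theorem Algebra.trace_eq_zero_iff_exists_pow_card_sub_self (c : L) :
    Algebra.trace K L c = 0 ↔ ∃ r : L, r ^ Fintype.card K - r = c := by
  let φ : L →ₗ[K] L := (FiniteField.frobeniusAlgHom K L).toLinearMap - LinearMap.id
  have hφ (r : L) : φ r = r ^ Fintype.card K - r := rfl
  have hle : LinearMap.range φ ≤ LinearMap.ker (Algebra.trace K L) := by
    rintro _ ⟨r, rfl⟩
    rw [LinearMap.mem_ker, hφ, map_sub, Algebra.trace_pow_card, sub_self]
  have hker : Module.finrank K (LinearMap.ker φ) ≤ 1 := by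
    have : LinearMap.ker φ ≤ LinearMap.range (Algebra.linearMap K L) := fun x hx =>
      FiniteField.mem_range_algebraMap_of_pow_card_eq_self (sub_eq_zero.mp hx)
    calc _ ≤ Module.finrank K (LinearMap.range (Algebra.linearMap K L)) :=
          Submodule.finrank_mono this
      _ ≤ 1 := (LinearMap.finrank_range_le _).trans (Module.finrank_self K).le
  have htrace : Module.finrank K (LinearMap.range (Algebra.trace K L)) = 1 := by
    rw [LinearMap.range_eq_top.mpr (Algebra.trace_surjective K L), finrank_top,
      Module.finrank_self]
  have heq : LinearMap.range φ = LinearMap.ker (Algebra.trace K L) := by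
    refine Submodule.eq_of_le_of_finrank_le hle ?_
    have := LinearMap.finrank_range_add_finrank_ker φ
    have := LinearMap.finrank_range_add_finrank_ker (Algebra.trace K L)
    omega
  rw [← LinearMap.mem_ker, ← heq]
  simp [hφ]

end ArtinSchreier

open WeierstrassCurve in
theorem exists_variableChange_smul_Eb_eq_iff {F : Type} [Field F] [CharP F 3] (b b' : F) :
    (∃ C : VariableChange F, C • Eb F b = Eb F b') ↔
      ∃ u r : F, u ^ 4 = 1 ∧ b' = u ^ 2 * (b + r ^ 3 - r) := by
  have h3 : (3 : F) = 0 := by exact_mod_cast CharP.cast_eq_zero F 3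
  constructor
  · rintro ⟨C, hC⟩
    have hu : ((C.u⁻¹ : Fˣ) : F) ≠ 0 := Units.ne_zero _
    have h2 : (2 : F) = -1 := by linear_combination h3
    have h1 := congrArg a₁ hC
    have h3' := congrArg a₃ hC
    have h4 := congrArg a₄ hC
    have h6 := congrArg a₆ hC
    simp only [variableChange_a₁, variableChange_a₃, variableChange_a₄, variableChange_a₆, Eb,
      h2, mul_zero, zero_add, add_zero, mul_eq_zero, hu, pow_eq_zero_iff, false_or, ne_eq,
      OfNat.ofNat_ne_zero, not_false_eq_true] at h1 h3' h4 h6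
    have hs : C.s = 0 := by simpa using h1
    have ht : C.t = 0 := by simpa using h3'
    simp only [hs, ht] at h4 h6
    have hu4 : ((C.u⁻¹ : Fˣ) : F) ^ 4 = 1 := by
      linear_combination -h4 + ((C.u⁻¹ : Fˣ) : F) ^ 4 * C.r ^ 2 * h3
    refine ⟨(C.u⁻¹ : Fˣ), C.r, hu4, ?_⟩
    linear_combination -h6 + ((C.u⁻¹ : Fˣ) : F) ^ 2 * (b + C.r ^ 3 - C.r) * hu4
  · rintro ⟨u, r, hu4, rfl⟩
    have hu : u ≠ 0 := by rintro rfl; norm_num at hu4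
    refine ⟨⟨(Units.mk0 u hu)⁻¹, r, 0, 0⟩, ?_⟩
    ext <;> simp only [variableChange_a₁, variableChange_a₂, variableChange_a₃,
      variableChange_a₄, variableChange_a₆, Eb, inv_inv, Units.val_mk0]
    · ring
    · linear_combination u ^ 2 * r * h3
    · ring
    · linear_combination (3 * r ^ 2 - 1) * hu4 + r ^ 2 * h3
    · linear_combination u ^ 2 * (b + r ^ 3 - r) * hu4

theorem FiniteField.isSquare_neg_one_of_isSquare_card {K : Type*} [Field K] [Fintype K]
    (h : IsSquare (Fintype.card K)) : IsSquare (-1 : K) := by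
  obtain ⟨n, hn⟩ := h
  rw [FiniteField.isSquare_neg_one_iff, hn, Nat.mul_mod]
  have := Nat.mod_lt n (by norm_num : 4 > 0)
  interval_cases n % 4 <;> norm_num

theorem ZMod.eq_or_eq_neg_iff_eq_zero_iff_eq_zero (x y : ZMod 3) :
    (x = y ∨ x = -y) ↔ (x = 0 ↔ y = 0) := by
  revert x y
  decide

theorem exists_variableChange_smul_Eb_eq_iff_trace {F : Type} [Field F] [Fintype F]
    [Algebra (ZMod 3) F] (hi : IsSquare (-1 : F)) (b b' : F) :
    (∃ C : WeierstrassCurve.VariableChange F, C • Eb F b = Eb F b') ↔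
      (Algebra.trace (ZMod 3) F b = Algebra.trace (ZMod 3) F b' ∨
        Algebra.trace (ZMod 3) F b = -Algebra.trace (ZMod 3) F b') := by
  have : CharP F 3 := charP_of_injective_algebraMap' (ZMod 3) 3
  set T := Algebra.trace (ZMod 3) F
  have trace_eq_zero_iff (c : F) : T c = 0 ↔ ∃ r : F, r ^ 3 - r = c := by
    simpa [ZMod.card] using Algebra.trace_eq_zero_iff_exists_pow_card_sub_self (K := ZMod 3) c
  have trace_add_cube_sub (x r : F) : T (x + r ^ 3 - r) = T x := by
    rw [add_sub_assoc, map_add, (trace_eq_zero_iff _).mpr ⟨r, rfl⟩, add_zero]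
  rw [exists_variableChange_smul_Eb_eq_iff]
  constructor
  · rintro ⟨u, r, hu4, rfl⟩
    rcases sq_eq_one_iff.mp (show (u ^ 2) ^ 2 = 1 by rw [← pow_mul, hu4]) with hu2 | hu2
    · left; rw [hu2, one_mul, trace_add_cube_sub]
    · right; rw [hu2, neg_one_mul, map_neg, trace_add_cube_sub, neg_neg]
  · rintro (h | h)
    · obtain ⟨r, hr⟩ := (trace_eq_zero_iff (b' - b)).mp (by rw [map_sub, h, sub_self])
      exact ⟨1, r, one_pow 4, by linear_combination -hr⟩
    · obtain ⟨i, hi⟩ := hi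
      obtain ⟨r, hr⟩ := (trace_eq_zero_iff (-b' - b)).mp (by rw [map_sub, map_neg, h]; ring)
      exact ⟨i, r, by linear_combination (1 - i ^ 2) * hi,
        by linear_combination (b + r ^ 3 - r) * hi + hr⟩

theorem typeI_isomorphic_iff_trace_eq_even
    (d : ℕ) (hd : Even d) (F : Type) [Field F] [Fintype F] [Algebra (ZMod 3) F]
    (hF : Fintype.card F = 3 ^ d) (b b' : F) :
    ((∃ C : WeierstrassCurve.VariableChange F, C • Eb F b = Eb F b') ↔
      (Algebra.trace (ZMod 3) F b = Algebra.trace (ZMod 3) F b' ∨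
        Algebra.trace (ZMod 3) F b = -Algebra.trace (ZMod 3) F b')) ∧
    ((∃ C : WeierstrassCurve.VariableChange F, C • Eb F b = Eb F b') ↔
      (Algebra.trace (ZMod 3) F b = 0 ↔ Algebra.trace (ZMod 3) F b' = 0)) := by
  have hi : IsSquare (-1 : F) :=
    FiniteField.isSquare_neg_one_of_isSquare_card (hF ▸ hd.isSquare_pow 3)
  have key := exists_variableChange_smul_Eb_eq_iff_trace hi b b'
  exact ⟨key, key.trans (ZMod.eq_or_eq_neg_iff_eq_zero_iff_eq_zero _ _)⟩
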